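/- Let n ≥ 0 be an integer and let 𝒞 : { z ∈ ℂ^{n+1} : z_{n+1} ≠ −i } → ℂ^{n+1} be the Cayley transform 𝒞(z) = ( 2i z_1/(i+z_{n+1}), …, 2i z_n/(i+z_{n+1}), (i−z_{n+1})/(i+z_{n+1}) ). For z in the Siegel domain 𝒰 = { z : Im z_{n+1} > Σ_{j=1}^{n} |z_j|² }, write t = Re z_{n+1} and q = Im z_{n+1} − Σ_{j=1}^{n} |z_j|². Then the absolute value of the determinant of the (real) Fréchet derivative of 𝒞 at z, viewed as an ℝ-linear map ℝ^{2n+2} → ℝ^{2n+2}, equals 4^{n+1} / ( t² + (1 + q + Σ_{j=1}^{n} |z_j|²)² )^{n+2}; equivalently, it equals 4^{n+1} / |i + z_{n+1}|^{2n+4}. -/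

import Mathlib

/-!
The Cayley transform is holomorphic, so its real derivative is the restriction of scalars of a
`ℂ`-linear map `L`, and `det_ℝ L = N_{ℂ/ℝ} (det_ℂ L) = |det_ℂ L|²`. The complex Jacobian matrix is
upper triangular: its diagonal is `2i / (i + z_{n+1})` (`n` times) followed by
`-2i / (i + z_{n+1})²`, giving `|det_ℂ L|² = 4^{n+1} / |i + z_{n+1}|^{2n+4}`. Finally
`t² + (1 + q + Σ|z_j|²)² = (Re z_{n+1})² + (1 + Im z_{n+1})² = |i + z_{n+1}|²`.
-/

noncomputable section

open Complex

/-- The Siegel domain 𝒰 ⊂ ℂ^{n+1}: Im z_{n+1} > Σ_{j<n} |z_j|². -/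
def Siegel (n : ℕ) : Set (Fin (n + 1) → ℂ) :=
  {z | (∑ j : Fin n, ‖z j.castSucc‖ ^ 2) < (z (Fin.last n)).im}

/-- The Cayley transform, defined away from z_{n+1} = −i. -/
def cayley (n : ℕ) (z : Fin (n + 1) → ℂ) : Fin (n + 1) → ℂ :=
  fun a =>
    if a = Fin.last n then (Complex.I - z (Fin.last n)) / (Complex.I + z (Fin.last n))
    else 2 * Complex.I * z a / (Complex.I + z (Fin.last n))

theorem HasFDerivAt.det_fderiv_real_eq_normSq_det {E : Type*} [NormedAddCommGroup E]
    [NormedSpace ℂ E] [NormedSpace ℝ E] [IsScalarTower ℝ ℂ E] [FiniteDimensional ℂ E]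
    {f : E → E} {L : E →L[ℂ] E} {z : E} (hf : HasFDerivAt f L z) :
    LinearMap.det (fderiv ℝ f z : E →ₗ[ℝ] E) = normSq (LinearMap.det (L : E →ₗ[ℂ] E)) := by
  rw [(hf.restrictScalars ℝ).fderiv]
  exact LinearMap.det_restrictScalars.trans (congrFun congr($Algebra.norm_complex_eq) _)

section CayleyDerivative

variable {n : ℕ}

def cayleyFDeriv (z : Fin (n + 1) → ℂ) : (Fin (n + 1) → ℂ) →L[ℂ] (Fin (n + 1) → ℂ) :=
  ContinuousLinearMap.pi fun i =>
    if i = Fin.last n then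
      (-(2 * I) / (I + z (Fin.last n)) ^ 2) • ContinuousLinearMap.proj (Fin.last n)
    else (2 * I / (I + z (Fin.last n))) • ContinuousLinearMap.proj i
      - (2 * I * z i / (I + z (Fin.last n)) ^ 2) • ContinuousLinearMap.proj (Fin.last n)

theorem cayleyFDeriv_apply (z v : Fin (n + 1) → ℂ) (i : Fin (n + 1)) :
    cayleyFDeriv z v i =
      if i = Fin.last n then -(2 * I) / (I + z (Fin.last n)) ^ 2 * v (Fin.last n)
      else 2 * I / (I + z (Fin.last n)) * v i
        - 2 * I * z i / (I + z (Fin.last n)) ^ 2 * v (Fin.last n) := by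
  by_cases hi : i = Fin.last n <;> simp [cayleyFDeriv, hi]

variable {z : Fin (n + 1) → ℂ}

theorem hasFDerivAt_cayley (hz : I + z (Fin.last n) ≠ 0) :
    HasFDerivAt (cayley n) (cayleyFDeriv z) z := by
  have hinv : HasFDerivAt (fun x : Fin (n + 1) → ℂ => (I + x (Fin.last n))⁻¹)
      ((ContinuousLinearMap.smulRight 1 (-((I + z (Fin.last n)) ^ 2)⁻¹)).comp
        (ContinuousLinearMap.proj (Fin.last n))) z :=
    (hasFDerivAt_inv hz).comp z ((hasFDerivAt_apply (𝕜 := ℂ) (Fin.last n) z).const_add I)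
  refine hasFDerivAt_pi.2 fun i => ?_
  rcases eq_or_ne i (Fin.last n) with rfl | hi
  · simp only [cayley, if_true, div_eq_mul_inv]
    refine (((hasFDerivAt_apply (Fin.last n) z).const_sub I).mul hinv).congr_fderiv ?_
    ext v
    simp only [add_apply, neg_apply, smul_apply, smul_eq_mul, one_apply_eq_self,
      ContinuousLinearMap.comp_apply, ContinuousLinearMap.proj_apply,
      ContinuousLinearMap.smulRight_apply]
    field_simp
    ring
  · simp only [cayley, if_neg hi, div_eq_mul_inv]
    refine (((hasFDerivAt_apply i z).const_mul (2 * I)).mul hinv).congr_fderiv ?_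
    ext v
    simp only [add_apply, sub_apply, smul_apply, smul_eq_mul, one_apply_eq_self,
      ContinuousLinearMap.comp_apply, ContinuousLinearMap.proj_apply,
      ContinuousLinearMap.smulRight_apply]
    field_simp
    ring

theorem det_cayleyFDeriv :
    LinearMap.det (cayleyFDeriv z : (Fin (n + 1) → ℂ) →ₗ[ℂ] (Fin (n + 1) → ℂ)) =
      (2 * I / (I + z (Fin.last n))) ^ n * (-(2 * I) / (I + z (Fin.last n)) ^ 2) := by
  rw [← LinearMap.det_toMatrix', Matrix.det_of_isUpperTriangular, Fin.prod_univ_castSucc]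
  · simp [LinearMap.toMatrix'_apply, cayleyFDeriv_apply, (Fin.castSucc_lt_last _).ne, div_pow]
  · intro i j hji
    have hj : j ≠ Fin.last n := (hji.trans_le (Fin.le_last i)).ne
    have hij : i ≠ j := (hji : j < i).ne'
    simp [LinearMap.toMatrix'_apply, cayleyFDeriv_apply, hj, hij]

theorem normSq_det_cayleyFDeriv :
    normSq (LinearMap.det (cayleyFDeriv z : (Fin (n + 1) → ℂ) →ₗ[ℂ] (Fin (n + 1) → ℂ))) =
      4 ^ (n + 1) / normSq (I + z (Fin.last n)) ^ (n + 2) := by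
  rw [det_cayleyFDeriv]
  simp only [map_mul, map_pow, normSq_div, normSq_neg, normSq_I, normSq_ofNat]
  ring

end CayleyDerivative

theorem I_add_ne_zero_of_mem_siegel {n : ℕ} {z : Fin (n + 1) → ℂ} (hz : z ∈ Siegel n) :
    I + z (Fin.last n) ≠ 0 := by
  have him : 0 < (z (Fin.last n)).im := lt_of_le_of_lt (by positivity) hz
  intro h
  have := congrArg im h
  simp only [add_im, I_im, zero_im] at this
  linarith

theorem stmt16 (n : ℕ) :
    ∀ z ∈ Siegel n,
      |LinearMap.det (fderiv ℝ (cayley n) z : (Fin (n + 1) → ℂ) →ₗ[ℝ] (Fin (n + 1) → ℂ))|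
          = 4 ^ (n + 1) /
              ((z (Fin.last n)).re ^ 2 +
                (1 + ((z (Fin.last n)).im - ∑ j : Fin n, ‖z j.castSucc‖ ^ 2) +
                  ∑ j : Fin n, ‖z j.castSucc‖ ^ 2) ^ 2) ^ (n + 2) ∧
        |LinearMap.det (fderiv ℝ (cayley n) z : (Fin (n + 1) → ℂ) →ₗ[ℝ] (Fin (n + 1) → ℂ))|
          = 4 ^ (n + 1) / ‖Complex.I + z (Fin.last n)‖ ^ (2 * n + 4) := by
  intro z hz
  have hdet : |LinearMap.det (fderiv ℝ (cayley n) z :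
      (Fin (n + 1) → ℂ) →ₗ[ℝ] (Fin (n + 1) → ℂ))| =
        4 ^ (n + 1) / normSq (I + z (Fin.last n)) ^ (n + 2) := by
    rw [(hasFDerivAt_cayley (I_add_ne_zero_of_mem_siegel hz)).det_fderiv_real_eq_normSq_det,
      abs_of_nonneg (normSq_nonneg _), normSq_det_cayleyFDeriv]
  have hnorm : ‖I + z (Fin.last n)‖ ^ (2 * n + 4) = normSq (I + z (Fin.last n)) ^ (n + 2) := by
    rw [normSq_eq_norm_sq, ← pow_mul]
    ring_nf
  have hnormSq : normSq (I + z (Fin.last n)) = (z (Fin.last n)).re ^ 2 +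
      (1 + ((z (Fin.last n)).im - ∑ j : Fin n, ‖z j.castSucc‖ ^ 2) +
        ∑ j : Fin n, ‖z j.castSucc‖ ^ 2) ^ 2 := by
    simp only [normSq_apply, add_re, add_im, I_re, I_im]
    ring
  exact ⟨by rw [hdet, hnormSq], by rw [hdet, hnorm]⟩

end
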